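/- Let D be a τ-atomic integral domain with τ symmetric and associate preserving. If G_τ(x) is a pseudoclique (a complete graph possibly with loops) for every x ∈ D^#, then D is a τ-UFD. -/

import Mathlib

/-- `a` is a nonzero nonunit, i.e. an element of `D^#`. -/
def NzNonunit {D : Type*} [CommRing D] (a : D) : Prop := a ≠ 0 ∧ ¬ IsUnit a

/-- `l` is the list of factors of a `τ`-factorization of `a`:
`a = λ * l.prod` for a unit `λ`, the factors are nonzero nonunits and pairwise `τ`-related. -/
def TauFact {D : Type*} [CommRing D] (τ : D → D → Prop) (l : List D) (a : D) : Prop :=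
  l ≠ [] ∧ (∀ b ∈ l, NzNonunit b) ∧ l.Pairwise τ ∧ ∃ u : Dˣ, a = (u : D) * l.prod

/-- `b` τ-divides `a`: `b` occurs as a factor in some τ-factorization of `a`. -/
def TauDvd {D : Type*} [CommRing D] (τ : D → D → Prop) (b a : D) : Prop :=
  ∃ l, TauFact τ l a ∧ b ∈ l

/-- `a` is τ-irreducible (a τ-atom): all its τ-factorizations are trivial. -/
def TauIrred {D : Type*} [CommRing D] (τ : D → D → Prop) (a : D) : Prop :=
  NzNonunit a ∧ ∀ l, TauFact τ l a → l.length = 1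

/-- `l` is a τ-atomic factorization of `a`. -/
def TauAtomicFact {D : Type*} [CommRing D] (τ : D → D → Prop) (l : List D) (a : D) : Prop :=
  TauFact τ l a ∧ ∀ b ∈ l, TauIrred τ b

/-- `D` is τ-atomic: every nonzero nonunit has a τ-atomic factorization. -/
def TauAtomic {D : Type*} [CommRing D] (τ : D → D → Prop) : Prop :=
  ∀ a : D, NzNonunit a → ∃ l, TauAtomicFact τ l a

def TauSymm {D : Type*} [CommRing D] (τ : D → D → Prop) : Prop :=
  ∀ a b, τ a b → τ b a

/-- τ is associate preserving. -/
def TauAssocPres {D : Type*} [CommRing D] (τ : D → D → Prop) : Prop :=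
  ∀ a b b' : D, τ a b → Associated b b' → τ a b'

/-- τ is refinable: replacing each factor of a τ-factorization by a
τ-factorization of it again yields a τ-factorization. -/
def TauRefinable {D : Type*} [CommRing D] (τ : D → D → Prop) : Prop :=
  ∀ (a : D) (l : List D) (F : List (List D)),
    TauFact τ l a → List.Forall₂ (fun b m => TauFact τ m b) l F →
    TauFact τ F.flatten a

/-- `a` is a vertex of the τ-irreducible divisor graph `G_τ(x)`. -/
def GVert {D : Type*} [CommRing D] (τ : D → D → Prop) (x a : D) : Prop :=
  TauIrred τ a ∧ TauDvd τ a x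

/-- `a` and `b` are adjacent (distinct, i.e. non-associated, vertices joined by an edge)
in `G_τ(x)`: some τ-factorization of `x` contains associates of both. -/
def GAdj {D : Type*} [CommRing D] (τ : D → D → Prop) (x a b : D) : Prop :=
  GVert τ x a ∧ GVert τ x b ∧ ¬ Associated a b ∧
  ∃ l, TauFact τ l x ∧ (∃ a' ∈ l, Associated a a') ∧ (∃ b' ∈ l, Associated b b')

/-- `G_τ(x)` is connected (vertices are taken up to associates). -/
def GConnected {D : Type*} [CommRing D] (τ : D → D → Prop) (x : D) : Prop :=
  ∀ a b, GVert τ x a → GVert τ x b →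
    Relation.ReflTransGen (fun u v => GAdj τ x u v ∨ Associated u v) a b

/-- The reduced graph `G̅_τ(x)` (loops deleted) is connected; loops do not affect
connectivity, so this is connectivity with respect to the same adjacency relation. -/
def GBarConnected {D : Type*} [CommRing D] (τ : D → D → Prop) (x : D) : Prop :=
  ∀ a b, GVert τ x a → GVert τ x b →
    Relation.ReflTransGen (fun u v => GAdj τ x u v ∨ Associated u v) a b

/-- `G_τ(x)` is a pseudoclique: any two non-associated vertices are adjacent.
(Equivalently, the reduced graph `G̅_τ(x)` is a clique / complete graph.) -/
def GPseudoclique {D : Type*} [CommRing D] (τ : D → D → Prop) (x : D) : Prop :=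
  ∀ a b, GVert τ x a → GVert τ x b → ¬ Associated a b → GAdj τ x a b

/-- `Diam(G_τ(x)) ≤ 1`: any two vertices are equal (associated) or adjacent. -/
def GDiamLeOne {D : Type*} [CommRing D] (τ : D → D → Prop) (x : D) : Prop :=
  ∀ a b, GVert τ x a → GVert τ x b → Associated a b ∨ GAdj τ x a b

/-- `G_τ(x)` has finitely many vertices (up to associates). -/
def GVertFinite {D : Type*} [CommRing D] (τ : D → D → Prop) (x : D) : Prop :=
  ∃ s : Finset D, ∀ a, GVert τ x a → ∃ c ∈ s, Associated a c

/-- The vertex `a` of `G_τ(x)` has finite degree: finitely many adjacent vertices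
up to associates (loops not counted). -/
def GDegFinite {D : Type*} [CommRing D] (τ : D → D → Prop) (x a : D) : Prop :=
  ∃ s : Finset D, ∀ b, GAdj τ x a b → ∃ c ∈ s, Associated b c

/-- The vertex `a` of `G_τ(x)` carries finitely many loops: there is a uniform bound on
the number of occurrences of associates of `a` in τ-atomic factorizations of `x`. -/
def GLoopsFinite {D : Type*} [CommRing D] (τ : D → D → Prop) (x a : D) : Prop :=
  ∃ N : ℕ, ∀ l m : List D, TauAtomicFact τ l x → m.Sublist l →
    (∀ b ∈ m, Associated a b) → m.length ≤ N

/-- `D` satisfies τ-ACCP. -/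
def TauACCP {D : Type*} [CommRing D] (τ : D → D → Prop) : Prop :=
  ∀ a : ℕ → D, (∀ i, TauDvd τ (a (i + 1)) (a i)) →
    ∃ N, ∀ i, N ≤ i → Associated (a i) (a N)

/-- `D` is a τ-UFD. -/
def TauUFD {D : Type*} [CommRing D] (τ : D → D → Prop) : Prop :=
  TauAtomic τ ∧ ∀ (x : D) (l₁ l₂ : List D), TauAtomicFact τ l₁ x → TauAtomicFact τ l₂ x →
    Multiset.Rel Associated (l₁ : Multiset D) (l₂ : Multiset D)

/-- `D` is a τ-FFD: each nonzero nonunit has only finitely many τ-factorizations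
up to rearrangement and associates. -/
def TauFFD {D : Type*} [CommRing D] (τ : D → D → Prop) : Prop :=
  ∀ x : D, NzNonunit x → ∃ S : Finset (Multiset D),
    ∀ l : List D, TauFact τ l x → ∃ m ∈ S, Multiset.Rel Associated (l : Multiset D) m

/-- `D` is a τ-WFFD: each nonzero nonunit has finitely many τ-divisors up to associates. -/
def TauWFFD {D : Type*} [CommRing D] (τ : D → D → Prop) : Prop :=
  ∀ x : D, NzNonunit x → ∃ s : Finset D,
    ∀ b, TauDvd τ b x → ∃ c ∈ s, Associated b c

/-- `D` is a τ-idf domain: each nonzero nonunit has finitely many τ-irreducible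
τ-divisors up to associates. -/
def TauIdf {D : Type*} [CommRing D] (τ : D → D → Prop) : Prop :=
  ∀ x : D, NzNonunit x → ∃ s : Finset D,
    ∀ b, TauIrred τ b → TauDvd τ b x → ∃ c ∈ s, Associated b c


/-! If an atom `c` dividing `x` is not associated to the first atom `a` of a τ-atomic
factorization `a · r₁ ⋯ rₙ` of `x`, the pseudoclique property puts associates of `a` and `c`
into a common τ-factorization of `x`; cancelling `a` yields a τ-factorization of `r₁ ⋯ rₙ`
containing an associate of `c`, so by induction `c` is associated to some `rᵢ`. Hence every
atom of one τ-atomic factorization has an associate in any other, and cancelling matched atoms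
one at a time gives uniqueness. -/

theorem associated_prod_erase {M : Type*} [CommMonoidWithZero M] [IsCancelMulZero M]
    [DecidableEq M] {l m : List M} {a b : M} (ha : a ∈ l) (hb : b ∈ m) (hab : Associated a b)
    (ha0 : a ≠ 0) (hlm : Associated l.prod m.prod) :
    Associated (l.erase a).prod (m.erase b).prod :=
  Associated.of_mul_left (by rwa [List.prod_erase ha, List.prod_erase hb]) hab ha0

section TauFactorization

variable {D : Type*} [CommRing D] {τ : D → D → Prop} {l m : List D} {x y a b : D}

theorem tauFact_iff : TauFact τ l x ↔
    l ≠ [] ∧ (∀ b ∈ l, NzNonunit b) ∧ l.Pairwise τ ∧ Associated l.prod x := by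
  have hunit : (∃ u : Dˣ, x = u * l.prod) ↔ Associated l.prod x :=
    ⟨fun ⟨u, h⟩ => ⟨u, by rw [h, mul_comm]⟩,
      fun ⟨u, h⟩ => ⟨u, by rw [← h, mul_comm]⟩⟩
  rw [TauFact, hunit]

theorem TauFact.associated_prod (h : TauFact τ l x) : Associated l.prod x :=
  (tauFact_iff.1 h).2.2.2

theorem TauFact.of_sublist (h : TauFact τ l x) (hml : m.Sublist l) (hm : m ≠ [])
    (hy : Associated m.prod y) : TauFact τ m y := by
  obtain ⟨-, hmem, hpw, -⟩ := tauFact_iff.1 h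
  exact tauFact_iff.2 ⟨hm, fun b hb => hmem b (hml.subset hb), hpw.sublist hml, hy⟩

theorem TauFact.of_associated (h : TauFact τ l x) (hxy : Associated x y) : TauFact τ l y :=
  h.of_sublist (List.Sublist.refl l) (tauFact_iff.1 h).1 (h.associated_prod.trans hxy)

theorem TauAtomicFact.of_sublist (h : TauAtomicFact τ l x) (hml : m.Sublist l) (hm : m ≠ [])
    (hy : Associated m.prod y) : TauAtomicFact τ m y :=
  ⟨h.1.of_sublist hml hm hy, fun b hb => h.2 b (hml.subset hb)⟩

theorem NzNonunit.of_associated (h : NzNonunit a) (hab : Associated a b) : NzNonunit b :=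
  ⟨hab.ne_zero_iff.1 h.1, mt hab.isUnit_iff.2 h.2⟩

theorem TauIrred.of_associated (h : TauIrred τ a) (hab : Associated a b) : TauIrred τ b :=
  ⟨h.1.of_associated hab, fun l hl => h.2 l (hl.of_associated hab.symm)⟩

theorem TauIrred.eq_singleton_of_tauFact (h : TauIrred τ a) (hl : TauFact τ l a) :
    ∃ c, l = [c] ∧ Associated c a := by
  obtain ⟨c, rfl⟩ := List.length_eq_one_iff.1 (h.2 l hl)
  exact ⟨c, rfl, by simpa using hl.associated_prod⟩

theorem TauFact.eq_singleton_of_tauIrred (h : TauFact τ [a] x) (ha : TauIrred τ a)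
    (hl : TauFact τ l x) : ∃ c, l = [c] ∧ Associated c a :=
  have hax : Associated a x := by simpa using h.associated_prod
  ha.eq_singleton_of_tauFact (hl.of_associated hax.symm)

theorem TauFact.nzNonunit [IsDomain D] (h : TauFact τ l x) : NzNonunit x := by
  obtain ⟨hne, hmem, -, hx⟩ := tauFact_iff.1 h
  obtain ⟨b, hb⟩ := List.exists_mem_of_ne_nil l hne
  refine NzNonunit.of_associated ⟨List.prod_ne_zero fun h0 => (hmem 0 h0).1 rfl, ?_⟩ hx
  exact fun hu => (hmem b hb).2 (List.prod_isUnit_iff.1 hu b hb)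

variable [IsDomain D] [DecidableEq D] {l₁ l₂ : List D} {c : D}

theorem exists_associated_mem_of_tauAtomicFact (hpc : ∀ x, NzNonunit x → GPseudoclique τ x)
    (h₁ : TauAtomicFact τ l₁ x) (hl : TauFact τ l x) (hc : c ∈ l) (hcirr : TauIrred τ c) :
    ∃ a ∈ l₁, Associated c a := by
  induction l₁ generalizing x l c with
  | nil => exact absurd rfl h₁.1.1
  | cons a rest ih =>
    have ha : TauIrred τ a := h₁.2 a List.mem_cons_self
    rcases eq_or_ne rest [] with rfl | hrest
    · obtain ⟨c', rfl, hc'a⟩ := h₁.1.eq_singleton_of_tauIrred ha hl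
      obtain rfl := List.mem_singleton.1 hc
      exact ⟨a, List.mem_cons_self, hc'a⟩
    by_cases hca : Associated c a
    · exact ⟨a, List.mem_cons_self, hca⟩
    obtain ⟨-, -, -, l', hl', ⟨c', hc', hcc'⟩, ⟨a', ha', haa'⟩⟩ :=
      hpc x h₁.1.nzNonunit c a ⟨hcirr, l, hl, hc⟩ ⟨ha, _, h₁.1, List.mem_cons_self⟩ hca
    have hc'_erase : c' ∈ l'.erase a' :=
      (List.mem_erase_of_ne (by rintro rfl; exact hca (hcc'.trans haa'.symm))).2 hc'
    have hprod : Associated (l'.erase a').prod rest.prod := by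
      simpa using associated_prod_erase ha' List.mem_cons_self haa'.symm
        (haa'.ne_zero_iff.1 ha.1.1) (hl'.associated_prod.trans h₁.1.associated_prod.symm)
    obtain ⟨r, hr, hc'r⟩ :=
      ih (h₁.of_sublist (List.sublist_cons_self a rest) hrest .rfl)
        (hl'.of_sublist List.erase_sublist (List.ne_nil_of_mem hc'_erase) hprod)
        hc'_erase (hcirr.of_associated hcc')
    exact ⟨r, List.mem_cons_of_mem a hr, hcc'.trans hc'r⟩

theorem TauAtomicFact.rel_associated (hpc : ∀ x, NzNonunit x → GPseudoclique τ x)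
    (h₁ : TauAtomicFact τ l₁ x) (h₂ : TauAtomicFact τ l₂ x) :
    Multiset.Rel Associated (l₁ : Multiset D) l₂ := by
  induction l₁ generalizing x l₂ with
  | nil => exact absurd rfl h₁.1.1
  | cons a rest ih =>
    have ha : TauIrred τ a := h₁.2 a List.mem_cons_self
    rcases eq_or_ne rest [] with rfl | hrest
    · obtain ⟨c, rfl, hca⟩ := h₁.1.eq_singleton_of_tauIrred ha h₂.1
      exact .cons hca.symm .zero
    obtain ⟨b, hb, hab⟩ :=
      exists_associated_mem_of_tauAtomicFact hpc h₂ h₁.1 List.mem_cons_self ha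
    have hb_erase : l₂.erase b ≠ [] := by
      intro he
      have hl₂ : l₂ = [b] := List.perm_singleton.1 (he ▸ List.perm_cons_erase hb)
      subst hl₂
      obtain ⟨c, hc, -⟩ := h₂.1.eq_singleton_of_tauIrred (h₂.2 b hb) h₁.1
      exact hrest (List.cons.inj hc).2
    have hprod : Associated rest.prod (l₂.erase b).prod := by
      simpa using associated_prod_erase List.mem_cons_self hb hab ha.1.1
        (h₁.1.associated_prod.trans h₂.1.associated_prod.symm)
    have hrel := ih (h₁.of_sublist (List.sublist_cons_self a rest) hrest .rfl)
      (h₂.of_sublist List.erase_sublist hb_erase hprod.symm)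
    rw [Multiset.coe_eq_coe.2 (List.perm_cons_erase hb), ← Multiset.cons_coe]
    exact Multiset.Rel.cons hab hrel

end TauFactorization

theorem stmt6_general {D : Type*} [CommRing D] [IsDomain D] (τ : D → D → Prop)
    (hatomic : TauAtomic τ)
    (hpc : ∀ x : D, NzNonunit x → GPseudoclique τ x) :
    TauUFD τ := by
  classical
  exact ⟨hatomic, fun _ _ _ h₁ h₂ => h₁.rel_associated hpc h₂⟩

theorem stmt6 {D : Type*} [CommRing D] [IsDomain D] (τ : D → D → Prop)
    (hsym : TauSymm τ) (hap : TauAssocPres τ) (hatomic : TauAtomic τ)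
    (hpc : ∀ x : D, NzNonunit x → GPseudoclique τ x) :
    TauUFD τ :=
  stmt6_general τ hatomic hpc
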